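/- arXiv:quant-ph/0703069 — 3 statements merged into one kernel-verified Lean document; each statement's English description precedes it below -/
import Mathlib

section
/- For any family of nonnegative operators {ρ_τ} on a Hilbert space H, any family of orthogonal projectors {P_τ}, and any measure dτ, the trace norm of ∫(ρ_τ − P_τ ρ_τ P_τ) dτ is at most 3 times the trace norm of ∫(id − P_τ) ρ_τ dτ. -/
open scoped ComplexOrder Matrix

open MeasureTheory

attribute [local instance] Matrix.frobeniusNormedAddCommGroup Matrix.frobeniusNormedSpace

/-- The trace norm (Schatten 1-norm) of a complex square matrix. -/
noncomputable def traceNorm {n : Type*} [Fintype n] [DecidableEq n]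
    (A : Matrix n n ℂ) : ℝ :=
  ((Matrix.posSemidef_conjTranspose_mul_self A).1.eigenvectorUnitary.1 *
    Matrix.diagonal (((↑) : ℝ → ℂ) ∘ (√·) ∘ (Matrix.posSemidef_conjTranspose_mul_self A).1.eigenvalues) *
    (star (Matrix.posSemidef_conjTranspose_mul_self A).1.eigenvectorUnitary : Matrix n n ℂ)).trace.re

/-!
Put `Q τ = 1 - P τ`. Pointwise `ρ - PρP = Qρ + (Qρ)ᴴ - QρQ`, so the integral on the left is
`A + Aᴴ - M` with `A = ∫ Qρ` and `M = ∫ QρQ`. Here `M` is positive semidefinite with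
`tr M = tr A` (as `Q² = Q`), so `‖A + Aᴴ - M‖₁ ≤ 2 ‖A‖₁ + tr M = 2 ‖A‖₁ + Re tr A ≤ 3 ‖A‖₁`.
The trace-norm facts this uses all come from the duality
`‖A‖₁ = max {Re tr (C A) | C Cᴴ ≤ 1}`, whose maximum is attained at the adjoint of the polar
factor of `A`.
-/

open scoped MatrixOrder

section StarOrderedRing

variable {R : Type*} [Ring R] [StarRing R] [PartialOrder R] [StarOrderedRing R]
  [TopologicalSpace R] [Algebra ℝ R] [ContinuousFunctionalCalculus ℝ R IsSelfAdjoint]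
  [NonnegSpectrumClass ℝ R]

lemma star_mul_self_le_one_of_mul_star_self_le_one {a : R} (h : a * star a ≤ 1) :
    star a * a ≤ 1 := by
  set p := star a * a
  -- `p² ≤ p` confines the spectrum of `p` to `[0, 1]`.
  have hpp : p * p ≤ p :=
    calc p * p = star a * (a * star a) * a := by simp only [p, mul_assoc]
      _ ≤ star a * 1 * a := star_left_conjugate_le_conjugate h a
      _ = p := by rw [mul_one]
  have hspec : ∀ x ∈ spectrum ℝ p, x * x ≤ x := by
    have h' : cfc (fun x : ℝ => x * x) p ≤ cfc (fun x : ℝ => x) p := by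
      rwa [cfc_mul (fun x : ℝ => x) (fun x : ℝ => x) p, cfc_id' ℝ p]
    exact (cfc_le_iff (R := ℝ) _ _ p).mp h'
  rw [CFC.le_one_iff (R := ℝ) p]
  intro x hx
  nlinarith [hspec x hx]

end StarOrderedRing

lemma IsSelfAdjoint.sub_mul_mul_eq {R : Type*} [Ring R] [StarRing R] {r p : R}
    (hr : IsSelfAdjoint r) (hp : IsSelfAdjoint p) :
    r - p * r * p = (1 - p) * r + star ((1 - p) * r) - (1 - p) * r * (1 - p) := by
  rw [star_mul, hr.star_eq, star_sub, star_one, hp.star_eq]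
  noncomm_ring

namespace Matrix

variable {n : Type*} [Fintype n]

lemma re_trace_le_re_trace_of_le {A B : Matrix n n ℂ} (h : A ≤ B) : A.trace.re ≤ B.trace.re := by
  have := (le_iff.mp h).trace_nonneg
  rw [trace_sub] at this
  exact (Complex.le_def.mp (sub_nonneg.mp this)).1

lemma two_mul_re_trace_star_mul_le (X Y : Matrix n n ℂ) :
    2 * (star X * Y).trace.re ≤ (star X * X).trace.re + (star Y * Y).trace.re := by
  have h := re_trace_le_re_trace_of_le (star_mul_self_nonneg (X - Y))
  have hYX : (star Y * X).trace.re = (star X * Y).trace.re := by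
    rw [show star Y * X = star (star X * Y) by rw [star_mul, star_star], star_eq_conjTranspose,
      trace_conjTranspose, Complex.star_def, Complex.conj_re]
  simp only [star_sub, sub_mul, mul_sub, trace_sub, Complex.sub_re, trace_zero,
    Complex.zero_re, hYX] at h
  linarith

variable [DecidableEq n]

lemma traceNorm_eq_re_trace_abs (A : Matrix n n ℂ) : traceNorm A = (CFC.abs A).trace.re := by
  have h := (posSemidef_conjTranspose_mul_self A).nonneg
  rw [CFC.abs, star_eq_conjTranspose, CFC.sqrt_eq_real_sqrt _ h, cfcₙ_eq_cfc,
    (posSemidef_conjTranspose_mul_self A).1.cfc_eq]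
  rfl

lemma traceNorm_neg (A : Matrix n n ℂ) : traceNorm (-A) = traceNorm A := by
  simp only [traceNorm_eq_re_trace_abs, CFC.abs_neg]

lemma PosSemidef.traceNorm_eq {M : Matrix n n ℂ} (hM : M.PosSemidef) :
    traceNorm M = M.trace.re := by
  rw [traceNorm_eq_re_trace_abs, CFC.abs_of_nonneg M hM.nonneg]

lemma exists_polar_decomposition (A : Matrix n n ℂ) :
    ∃ W : Matrix n n ℂ, star W * W ≤ 1 ∧ W * CFC.abs A = A ∧ star W * A = CFC.abs A := by
  set a := CFC.abs A
  -- `N` is the Moore–Penrose inverse of `a`, thanks to `0⁻¹ = 0`.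
  set N := cfc (·⁻¹ : ℝ → ℝ) a
  have hmul (f g : ℝ → ℝ) : cfc (fun x => f x * g x) a = cfc f a * cfc g a :=
    cfc_mul f g a (a.finite_real_spectrum.continuousOn f) (a.finite_real_spectrum.continuousOn g)
  have ha : IsSelfAdjoint a := (CFC.abs_nonneg A).isSelfAdjoint
  have hN : IsSelfAdjoint N := cfc_predicate _ a
  have hAA : star A * A = a * a := (CFC.abs_mul_abs A).symm
  have hNaa : N * a * a = a := by
    have := cfc_congr (f := fun x : ℝ => x⁻¹ * x * x) (g := fun x => x) (a := a)
      fun x _ => inv_mul_mul_self x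
    rwa [hmul, hmul, cfc_id' ℝ a] at this
  have haNa : a * N * a = a := by
    have := cfc_congr (f := fun x : ℝ => x * x⁻¹ * x) (g := fun x => x) (a := a)
      fun x _ => mul_inv_mul_cancel x
    rwa [hmul, hmul, cfc_id' ℝ a] at this
  have haN : a * N ≤ 1 := by
    have := cfc_le_one (fun x : ℝ => x * x⁻¹) a fun x _ => mul_inv_le_one
    rwa [hmul, cfc_id' ℝ a] at this
  refine ⟨A * N, ?_, ?_, ?_⟩
  · calc star (A * N) * (A * N) = N * (star A * A) * N := by
          rw [star_mul, hN.star_eq]; noncomm_ring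
      _ = a * N := by rw [hAA, ← mul_assoc, hNaa]
      _ ≤ 1 := haN
  · set D := A - A * N * a
    have hD : star D * D = 0 :=
      calc star D * D = star A * A - star A * A * N * a - a * N * (star A * A)
            + a * N * (star A * A) * N * a := by
            simp only [D, star_sub, star_mul, ha.star_eq, hN.star_eq]; noncomm_ring
        _ = (a - a * N * a) * (a - a * N * a) := by rw [hAA]; noncomm_ring
        _ = 0 := by rw [haNa, sub_self, zero_mul]
    rw [star_eq_conjTranspose, conjTranspose_mul_self_eq_zero, sub_eq_zero] at hD
    exact hD.symm
  · rw [star_mul, hN.star_eq, mul_assoc, hAA, ← mul_assoc, hNaa]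

/-- With `s = |A| ^ (1/2)` and `A = W s s`, `tr (C A) = tr ((Cᴴ s)ᴴ (W s))`; AM–GM for the trace
form bounds it by the mean of `tr (s C Cᴴ s)` and `tr (s Wᴴ W s)`, each at most `tr (s s)`. -/
lemma re_trace_mul_le_traceNorm {C : Matrix n n ℂ} (hC : C * star C ≤ 1) (A : Matrix n n ℂ) :
    (C * A).trace.re ≤ traceNorm A := by
  obtain ⟨W, hW, hWA, -⟩ := exists_polar_decomposition A
  set s := CFC.sqrt (CFC.abs A)
  have hs : IsSelfAdjoint s := (CFC.sqrt_nonneg _).isSelfAdjoint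
  have hss : s * s = CFC.abs A := CFC.sqrt_mul_sqrt_self _ (CFC.abs_nonneg A)
  have hconj {K : Matrix n n ℂ} (hK : K ≤ 1) : (s * K * s).trace.re ≤ traceNorm A := by
    rw [traceNorm_eq_re_trace_abs, ← hss]
    simpa using re_trace_le_re_trace_of_le (hs.conjugate_le_conjugate hK)
  have hCA : (star (star C * s) * (W * s)).trace = (C * A).trace := by
    rw [← hWA, ← hss, star_mul, star_star, hs.star_eq, mul_assoc, trace_mul_comm]
    simp only [mul_assoc]
  have hX : star (star C * s) * (star C * s) = s * (C * star C) * s := by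
    rw [star_mul, star_star, hs.star_eq]; noncomm_ring
  have hY : star (W * s) * (W * s) = s * (star W * W) * s := by
    rw [star_mul, hs.star_eq]; noncomm_ring
  have key := two_mul_re_trace_star_mul_le (star C * s) (W * s)
  rw [hCA, hX, hY] at key
  linarith [hconj hC, hconj hW]

lemma exists_re_trace_mul_eq_traceNorm (A : Matrix n n ℂ) :
    ∃ C : Matrix n n ℂ, C * star C ≤ 1 ∧ star C * C ≤ 1 ∧ (C * A).trace.re = traceNorm A := by
  obtain ⟨W, hW, -, hWA⟩ := exists_polar_decomposition A
  refine ⟨star W, by rwa [star_star], ?_, by rw [hWA, traceNorm_eq_re_trace_abs]⟩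
  exact star_mul_self_le_one_of_mul_star_self_le_one (by rwa [star_star])

lemma re_trace_le_traceNorm (A : Matrix n n ℂ) : A.trace.re ≤ traceNorm A := by
  simpa using re_trace_mul_le_traceNorm (C := 1) (by simp) A

lemma traceNorm_add_le (A B : Matrix n n ℂ) :
    traceNorm (A + B) ≤ traceNorm A + traceNorm B := by
  obtain ⟨C, hC, -, hCAB⟩ := exists_re_trace_mul_eq_traceNorm (A + B)
  rw [← hCAB, mul_add, trace_add, Complex.add_re]
  exact add_le_add (re_trace_mul_le_traceNorm hC A) (re_trace_mul_le_traceNorm hC B)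

lemma traceNorm_conjTranspose_le (A : Matrix n n ℂ) : traceNorm Aᴴ ≤ traceNorm A := by
  obtain ⟨C, -, hC, hCA⟩ := exists_re_trace_mul_eq_traceNorm Aᴴ
  have h : (C * Aᴴ).trace.re = (star C * A).trace.re := by
    rw [← trace_mul_comm, ← star_eq_conjTranspose, ← star_star C, ← star_mul, star_star,
      star_eq_conjTranspose, trace_conjTranspose, Complex.star_def, Complex.conj_re]
  rw [← hCA, h]
  exact re_trace_mul_le_traceNorm (by rwa [star_star]) A

lemma traceNorm_conjTranspose (A : Matrix n n ℂ) : traceNorm Aᴴ = traceNorm A :=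
  (traceNorm_conjTranspose_le A).antisymm (by simpa using traceNorm_conjTranspose_le Aᴴ)

lemma traceNorm_add_conjTranspose_sub_le (A : Matrix n n ℂ) {M : Matrix n n ℂ}
    (hM : M.PosSemidef) (htr : M.trace = A.trace) :
    traceNorm (A + Aᴴ - M) ≤ 3 * traceNorm A :=
  calc traceNorm (A + Aᴴ - M) = traceNorm (A + Aᴴ + -M) := by rw [sub_eq_add_neg]
    _ ≤ traceNorm (A + Aᴴ) + traceNorm (-M) := traceNorm_add_le _ _
    _ ≤ traceNorm A + traceNorm Aᴴ + traceNorm (-M) := by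
        gcongr; exact traceNorm_add_le A Aᴴ
    _ = 2 * traceNorm A + A.trace.re := by
        rw [traceNorm_conjTranspose, traceNorm_neg, hM.traceNorm_eq, htr]; ring
    _ ≤ 3 * traceNorm A := by linarith [re_trace_le_traceNorm A]

/-- `Integrable` asks for a `ContinuousENorm` over the product topology of `Matrix`, which the
Frobenius instance matches only up to unfolding. -/
@[reducible] noncomputable def frobeniusContinuousENorm : ContinuousENorm (Matrix n n ℂ) :=
  SeminormedAddGroup.toContinuousENorm

/-- Stated for the metric topology of the Frobenius norm, the one `integral_nonneg` sees. -/
instance :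
    @ClosedIciTopology (Matrix n n ℂ) PseudoMetricSpace.toUniformSpace.toTopologicalSpace _ where
  isClosed_Ici A := by
    have h : Set.Ici A =
        {M | (M - A)ᴴ = M - A} ∩ ⋂ x : n → ℂ, {M | 0 ≤ star x ⬝ᵥ ((M - A) *ᵥ x)} := by
      ext M
      simp [le_iff, posSemidef_iff_dotProduct_mulVec, IsHermitian]
    rw [h]
    exact (isClosed_eq (by fun_prop) (by fun_prop)).inter
      (isClosed_iInter fun x => isClosed_le continuous_const (by fun_prop))

end Matrix

attribute [local instance] Matrix.frobeniusContinuousENorm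

section Integral

variable {n : Type*} [Fintype n] {T : Type*} [MeasurableSpace T] {μ : Measure T}

lemma Matrix.conjTranspose_integral (f : T → Matrix n n ℂ) :
    (∫ τ, f τ ∂μ)ᴴ = ∫ τ, (f τ)ᴴ ∂μ :=
  ((starL' ℝ).integral_comp_comm f).symm

lemma MeasureTheory.Integrable.conjTranspose {f : T → Matrix n n ℂ} (hf : Integrable f μ) :
    Integrable (fun τ => (f τ)ᴴ) μ :=
  (starL' ℝ : Matrix n n ℂ ≃L[ℝ] Matrix n n ℂ).toContinuousLinearMap.integrable_comp hf

lemma Matrix.trace_integral {f : T → Matrix n n ℂ} (hf : Integrable f μ) :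
    (∫ τ, f τ ∂μ).trace = ∫ τ, (f τ).trace ∂μ :=
  ((traceLinearMap n ℂ ℂ).toContinuousLinearMap.integral_comp_comm hf).symm

end Integral

/-- Gentle-measurement-type lemma: for families of positive semidefinite
operators ρ_τ and orthogonal projections P_τ on a finite-dimensional Hilbert
space, and any measure dτ,
‖∫ (ρ_τ − P_τ ρ_τ P_τ) dτ‖₁ ≤ 3 ‖∫ (id − P_τ) ρ_τ dτ‖₁. -/
theorem traceNorm_integral_sub_proj_conj_le {n : Type*} [Fintype n] [DecidableEq n]
    {T : Type*} [MeasurableSpace T] (μ : Measure T)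
    (ρ P : T → Matrix n n ℂ)
    (hρ : ∀ τ, (ρ τ).PosSemidef)
    (hProj : ∀ τ, (P τ)ᴴ = P τ ∧ P τ * P τ = P τ)
    (hInt : @Integrable _ _ (@SeminormedAddGroup.toContinuousENorm _ (Matrix.frobeniusNormedAddCommGroup).toSeminormedAddCommGroup.toSeminormedAddGroup) _ _ ρ μ)
    (hInt₁ : @Integrable _ _ (@SeminormedAddGroup.toContinuousENorm _ (Matrix.frobeniusNormedAddCommGroup).toSeminormedAddCommGroup.toSeminormedAddGroup) _ _ (fun τ => P τ * ρ τ) μ)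
    (hInt₂ : @Integrable _ _ (@SeminormedAddGroup.toContinuousENorm _ (Matrix.frobeniusNormedAddCommGroup).toSeminormedAddCommGroup.toSeminormedAddGroup) _ _ (fun τ => P τ * ρ τ * P τ) μ) :
    traceNorm (∫ τ, (ρ τ - P τ * ρ τ * P τ) ∂μ) ≤
      3 * traceNorm (∫ τ, ((1 : Matrix n n ℂ) - P τ) * ρ τ ∂μ) := by
  set Q : T → Matrix n n ℂ := fun τ => 1 - P τ
  have hQ (τ : T) : IsStarProjection (Q τ) := IsStarProjection.one_sub ⟨(hProj τ).2, (hProj τ).1⟩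
  have hQρ : Integrable (fun τ => Q τ * ρ τ) μ :=
    (hInt.sub hInt₁).congr (ae_of_all _ fun τ => by simp only [Pi.sub_apply, Q, sub_mul, one_mul])
  have hQρQ : Integrable (fun τ => Q τ * ρ τ * Q τ) μ := by
    refine ((hInt.sub hInt₁).sub (hInt₁.conjTranspose.sub hInt₂)).congr (ae_of_all _ fun τ => ?_)
    simp only [Pi.sub_apply, Q, Matrix.conjTranspose_mul, (hρ τ).1.eq, (hProj τ).1]
    noncomm_ring
  have hsplit : ∫ τ, (ρ τ - P τ * ρ τ * P τ) ∂μ =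
      (∫ τ, Q τ * ρ τ ∂μ) + (∫ τ, Q τ * ρ τ ∂μ)ᴴ - ∫ τ, Q τ * ρ τ * Q τ ∂μ := by
    rw [Matrix.conjTranspose_integral, ← integral_add hQρ hQρ.conjTranspose,
      ← integral_sub (f := fun τ => Q τ * ρ τ + (Q τ * ρ τ)ᴴ) (hQρ.add hQρ.conjTranspose) hQρQ]
    congr 1
    funext τ
    exact IsSelfAdjoint.sub_mul_mul_eq (hρ τ).1 (hProj τ).1
  have hM : (∫ τ, Q τ * ρ τ * Q τ ∂μ).PosSemidef := by
    refine Matrix.nonneg_iff_posSemidef.mp (integral_nonneg fun τ => ?_)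
    have h := ((hρ τ).conjTranspose_mul_mul_same (Q τ)).nonneg
    rwa [← Matrix.star_eq_conjTranspose, (hQ τ).isSelfAdjoint.star_eq] at h
  have htr : (∫ τ, Q τ * ρ τ * Q τ ∂μ).trace = (∫ τ, Q τ * ρ τ ∂μ).trace := by
    rw [Matrix.trace_integral hQρQ, Matrix.trace_integral hQρ]
    congr 1 with τ
    rw [Matrix.trace_mul_comm, ← mul_assoc, (hQ τ).isIdempotentElem.eq]
  rw [hsplit]
  exact Matrix.traceNorm_add_conjTranspose_sub_le _ hM htr
end

section
/- Let ρ² be the two-qubit singlet state, the rank-one projector onto (|0⟩⊗|1⟩ − |1⟩⊗|0⟩)/√2. For every single-qubit density operator σ, the fidelity-type overlap tr(ρ² · σ⊗σ) is at most 1/4. -/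
open scoped ComplexOrder Matrix

open Kronecker

/-- The singlet state vector (|0⟩⊗|1⟩ − |1⟩⊗|0⟩)/√2 on C²⊗C². -/
noncomputable def singletVec : Fin 2 × Fin 2 → ℂ := fun p =>
  if p = (0, 1) then (Real.sqrt 2 : ℂ)⁻¹
  else if p = (1, 0) then -(Real.sqrt 2 : ℂ)⁻¹ else 0

/-- The singlet density operator |Ψ⁻⟩⟨Ψ⁻|. -/
noncomputable def singlet : Matrix (Fin 2 × Fin 2) (Fin 2 × Fin 2) ℂ :=
  Matrix.vecMulVec singletVec (star singletVec)

/-- For every single-qubit density operator σ, the overlap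
tr(ρ² · σ⊗σ) with the singlet ρ² is at most 1/4. -/
theorem singlet_overlap_iid_le (σ : Matrix (Fin 2) (Fin 2) ℂ)
    (hσ : σ.PosSemidef) (htr : σ.trace = 1) :
    ((singlet * (σ ⊗ₖ σ)).trace).re ≤ 1 / 4 := by
  have h2 : ((Real.sqrt 2 : ℂ)⁻¹) * ((Real.sqrt 2 : ℂ)⁻¹) = 2⁻¹ := by
    rw [← mul_inv, ← Complex.ofReal_mul, Real.mul_self_sqrt (by norm_num)]
    norm_num
  have h : (singlet * (σ ⊗ₖ σ)).trace = σ 0 0 * σ 1 1 - σ 0 1 * σ 1 0 := by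
    simp [singlet, singletVec, Matrix.trace, Matrix.mul_apply, Matrix.kroneckerMap_apply,
      Matrix.vecMulVec_apply, Fintype.sum_prod_type, Fin.sum_univ_two, Prod.ext_iff]
    ring_nf
    rw [show ((Real.sqrt 2:ℂ))⁻¹^2 = 2⁻¹ by rw [sq]; exact h2]
    ring
  rw [h]
  have h10 : σ 1 0 = starRingEnd ℂ (σ 0 1) := (hσ.1.apply 1 0).symm
  have h00 : (σ 0 0).im = 0 := hσ.1.coe_re_apply_self 0 ▸ Complex.ofReal_im _
  have h11 : (σ 1 1).im = 0 := hσ.1.coe_re_apply_self 1 ▸ Complex.ofReal_im _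
  have htr' : (σ 0 0).re + (σ 1 1).re = 1 := by
    have := congrArg Complex.re htr
    simpa [Matrix.trace, Fin.sum_univ_two] using this
  have hmul : (σ 0 1 * σ 1 0).re = Complex.normSq (σ 0 1) := by
    rw [h10, Complex.mul_conj]; simp
  simp [Complex.sub_re, Complex.mul_re, h00, h11, hmul]
  nlinarith [Complex.normSq_nonneg (σ 0 1), sq_nonneg ((σ 0 0).re - (σ 1 1).re)]
end

section
/- For any permutation-invariant density operator ρ^N on H^⊗N (π ρ^N π† = ρ^N for all permutations π of the N factors), there exists a unit vector Ψ in the symmetric subspace Sym^N(H ⊗ K) with K ≅ H, such that tracing out the K-factors of |Ψ⟩⟨Ψ| recovers ρ^N. -/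
open scoped ComplexOrder Matrix MatrixOrder

/-! Take `Ψ(b, k) = √ρ b k`. Since `√ρ` is Hermitian with `√ρ * √ρ = ρ`, tracing out the
`K`-strings `k` gives `ρ`, and `‖Ψ‖² = tr ρ = 1`. The square root is unique among positive
semidefinite matrices, so it inherits the permutation invariance of `ρ`. -/

theorem Matrix.cfcSqrt_submatrix_equiv {m n 𝕜 : Type*} [Fintype m] [Fintype n] [DecidableEq m]
    [DecidableEq n] [RCLike 𝕜] {A : Matrix n n 𝕜} (hA : A.PosSemidef) (e : m ≃ n) :
    CFC.sqrt (A.submatrix e e) = (CFC.sqrt A).submatrix e e :=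
  CFC.sqrt_unique
    (by rw [Matrix.submatrix_mul_equiv, CFC.sqrt_mul_sqrt_self A hA.nonneg])
    ((Matrix.nonneg_iff_posSemidef.mp (CFC.sqrt_nonneg A)).submatrix e).nonneg

theorem Matrix.mul_conjTranspose_apply {m n α : Type*} [Fintype n] [NonUnitalSemiring α]
    [StarRing α] (A : Matrix m n α) (i j : m) :
    (A * Aᴴ) i j = ∑ k, A i k * star (A j k) := by
  simp only [Matrix.mul_apply, Matrix.conjTranspose_apply]

theorem Matrix.trace_mul_conjTranspose_eq_sum_norm_sq {m n 𝕜 : Type*} [Fintype m] [Fintype n]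
    [RCLike 𝕜] (A : Matrix m n 𝕜) :
    (A * Aᴴ).trace = ((∑ i, ∑ j, ‖A i j‖ ^ 2 : ℝ) : 𝕜) := by
  simp only [Matrix.trace, Matrix.diag, Matrix.mul_conjTranspose_apply, RCLike.star_def,
    RCLike.mul_conj]
  push_cast
  rfl

theorem Fintype.sum_arrow_prod {ι α β M : Type*} [Fintype ι] [DecidableEq ι] [Fintype α]
    [Fintype β] [AddCommMonoid M] (f : (ι → α) → (ι → β) → M) :
    ∑ g : ι → α × β, f (Prod.fst ∘ g) (Prod.snd ∘ g) = ∑ a, ∑ b, f a b := by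
  rw [← Fintype.sum_prod_type']
  exact Fintype.sum_equiv (Equiv.arrowProdEquivProdArrow ι _ _) _ _ fun _ => rfl

/-- Symmetric purification: any permutation-invariant density operator ρ^N on
H^⊗N (here H = C^d, with H^⊗N in the product basis indexed by strings
Fin N → Fin d) admits a purifying unit vector Ψ in the symmetric subspace of
(H ⊗ K)^⊗N with K ≅ H (indexed by strings Fin N → Fin d × Fin d, symmetric
under simultaneous permutation of the N pairs), whose partial trace over the
K-factors recovers ρ^N. -/
theorem symmetric_purification {d N : ℕ}
    (ρ : Matrix (Fin N → Fin d) (Fin N → Fin d) ℂ)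
    (hρ : ρ.PosSemidef) (htr : ρ.trace = 1)
    (hsym : ∀ (π : Equiv.Perm (Fin N)) (b c : Fin N → Fin d),
      ρ (b ∘ π) (c ∘ π) = ρ b c) :
    ∃ Ψ : (Fin N → Fin d × Fin d) → ℂ,
      (∑ b, ‖Ψ b‖ ^ 2 = 1) ∧
      (∀ (π : Equiv.Perm (Fin N)) (b : Fin N → Fin d × Fin d), Ψ (b ∘ π) = Ψ b) ∧
      (∀ b c : Fin N → Fin d,
        ρ b c = ∑ k : Fin N → Fin d,
          Ψ (fun i => (b i, k i)) * (starRingEnd ℂ) (Ψ (fun i => (c i, k i)))) := by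
  set S := CFC.sqrt ρ
  have hS : Sᴴ = S :=
    (Matrix.nonneg_iff_posSemidef.mp (CFC.sqrt_nonneg ρ)).isHermitian
  have hSS : S * Sᴴ = ρ := by rw [hS]; exact CFC.sqrt_mul_sqrt_self ρ hρ.nonneg
  refine ⟨fun g => S (Prod.fst ∘ g) (Prod.snd ∘ g), ?_, fun π g => ?_, fun b c => ?_⟩
  · rw [Fintype.sum_arrow_prod (fun b k => ‖S b k‖ ^ 2)]
    have h := Matrix.trace_mul_conjTranspose_eq_sum_norm_sq S
    rw [hSS, htr] at h
    exact RCLike.ofReal_injective (h.symm.trans RCLike.ofReal_one.symm)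
  · let e : (Fin N → Fin d) ≃ (Fin N → Fin d) := π.symm.arrowCongr (Equiv.refl _)
    have hρe : ρ.submatrix e e = ρ := Matrix.ext (hsym π)
    change S.submatrix e e (Prod.fst ∘ g) (Prod.snd ∘ g) = _
    exact (congrFun₂ (hρe ▸ Matrix.cfcSqrt_submatrix_equiv hρ e) _ _).symm
  · rw [← hSS, Matrix.mul_conjTranspose_apply]
    rfl
end
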